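/- Let β : ℂ → ℂ be smooth. For (z,w) ∈ ℂ × ℂ define the ℝ-linear map J_{(z,w)} : ℂ × ℂ → ℂ × ℂ by J_{(z,w)}(u,v) = (i·u, i·v + 2i·β(z)·conj(w)·conj(u)). Then J_{(z,w)} ∘ J_{(z,w)} = -id for every (z,w). Moreover, for every real-differentiable function f : ℂ → ℂ and every z ∈ ℂ, the real 2-plane in ℂ × ℂ spanned by (1, ∂f/∂x(z)) and (i, ∂f/∂y(z)) (the tangent plane to the graph of f at (z, f(z))) is invariant under J_{(z,f(z))} if and only if ∂_{z̄}f(z) + β(z)·conj(f(z)) = 0. -/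
import Mathlib


open ComplexConjugate

/-- The explicit almost complex structure on a pseudoholomorphic line bundle over a
curve from Section 6 of the paper:
`J_{(z,w)}(u,v) = (i·u, i·v + 2i·β(z)·conj(w)·conj(u))`. -/
noncomputable def Jbeta (β : ℂ → ℂ) : ℂ × ℂ → ℂ × ℂ → ℂ × ℂ :=
  fun p q =>
    (Complex.I * q.1, Complex.I * q.2 + 2 * Complex.I * β p.1 * conj p.2 * conj q.1)

/-- Section 6 of the paper: `J_{(z,w)}` is an ℝ-linear complex structure on `ℂ × ℂ`,
and the tangent plane to the graph of a real-differentiable `f` at `(z, f(z))` is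
`J_{(z,f(z))}`-invariant iff `∂_{z̄}f(z) + β(z)·conj(f(z)) = 0`. -/
theorem graph_invariant_iff_PH_section_equation
    (β : ℂ → ℂ) (hβ : ContDiff ℝ (⊤ : ℕ∞) β) :
    (∀ p : ℂ × ℂ, IsLinearMap ℝ (Jbeta β p)) ∧
    (∀ p q : ℂ × ℂ, Jbeta β p (Jbeta β p q) = -q) ∧
    (∀ f : ℂ → ℂ, Differentiable ℝ f → ∀ z : ℂ,
      ((∀ q ∈ Submodule.span ℝ
          ({((1 : ℂ), fderiv ℝ f z 1), (Complex.I, fderiv ℝ f z Complex.I)} : Set (ℂ × ℂ)),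
          Jbeta β (z, f z) q ∈ Submodule.span ℝ
            ({((1 : ℂ), fderiv ℝ f z 1), (Complex.I, fderiv ℝ f z Complex.I)} : Set (ℂ × ℂ)))
        ↔ (1/2 : ℂ) * (fderiv ℝ f z 1 + Complex.I * fderiv ℝ f z Complex.I)
            + β z * conj (f z) = 0)) := by
  refine ⟨?_, ?_, ?_⟩
  · intro p
    constructor
    · intro x y
      simp only [Jbeta, Prod.fst_add, Prod.snd_add, map_add, Prod.mk_add_mk, Prod.mk.injEq]
      constructor <;> ring
    · intro c x
      simp only [Jbeta, Prod.smul_fst, Prod.smul_snd, Complex.real_smul, map_mul,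
        Complex.conj_ofReal, Prod.smul_mk, Prod.mk.injEq]
      constructor <;> ring
  · intro p q
    simp only [Jbeta, map_add, map_mul, Complex.conj_I, Prod.ext_iff,
      Prod.fst_neg, Prod.snd_neg]
    constructor
    · linear_combination (q.1 : ℂ) * Complex.I_sq
    · linear_combination (q.2 : ℂ) * Complex.I_sq
  · intro f hf z
    set a := fderiv ℝ f z 1 with ha
    set b := fderiv ℝ f z Complex.I with hbdef
    constructor
    · intro H
      have h1 : ((1:ℂ), a) ∈ Submodule.span ℝ ({((1:ℂ), a), (Complex.I, b)} : Set (ℂ × ℂ)) :=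
        Submodule.subset_span (by simp)
      have h2 := H _ h1
      rw [Submodule.mem_span_pair] at h2
      obtain ⟨s, t, hst⟩ := h2
      have hst1 : (s:ℂ) + (t:ℂ) * Complex.I = Complex.I := by
        have := congrArg Prod.fst hst
        simpa [Jbeta, Prod.fst_add, Prod.smul_fst, Complex.real_smul] using this
      have hs : s = 0 ∧ t = 1 := by
        constructor
        · have := congrArg Complex.re hst1; simpa using this
        · have := congrArg Complex.im hst1; simpa using this
      have hst2 : (s:ℂ) * a + (t:ℂ) * b
          = Complex.I * a + 2 * Complex.I * β z * conj (f z) := by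
        have := congrArg Prod.snd hst
        simpa [Jbeta, Prod.snd_add, Prod.smul_snd, Complex.real_smul] using this
      obtain ⟨rfl, rfl⟩ := hs
      have hb2 : b = Complex.I * a + 2 * Complex.I * β z * conj (f z) := by
        simpa using hst2
      linear_combination (Complex.I/2) * hb2 + (a/2 + β z * conj (f z)) * Complex.I_sq
    · intro heq q hq
      have hb2 : b = Complex.I * a + 2 * Complex.I * β z * conj (f z) := by
        linear_combination (-2*Complex.I) * heq + b * Complex.I_sq
      rw [Submodule.mem_span_pair] at hq
      obtain ⟨s, t, rfl⟩ := hq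
      rw [Submodule.mem_span_pair]
      refine ⟨-t, s, ?_⟩
      simp only [Jbeta, Prod.fst_add, Prod.snd_add, Prod.smul_fst, Prod.smul_snd,
        Complex.real_smul, map_add, map_mul, Complex.conj_ofReal, Complex.conj_I,
        map_one, Prod.mk_add_mk, Prod.smul_mk, Prod.ext_iff, Complex.ofReal_neg]
      constructor
      · linear_combination (-(t:ℂ)) * Complex.I_sq
      · linear_combination ((s:ℂ) - (t:ℂ) * Complex.I) * hb2 + (-(t:ℂ)) * a * Complex.I_sq
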